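/- Let c* be the unique positive root of 2 − 2e^c + c(e^c − 2) = 0. For all reals w and c with 0 ≤ w ≤ 1 and c ≥ 0, it holds that w·c²·e^{−c} − w²·c²·e^{−2c} ≤ (c*)²·(e^{−c*} − e^{−2c*}). -/

import Mathlib

/-!
With `t = w e^{-c}` the left-hand side is `c² (t - t²)`. If `c ≥ log 2`, then `t ≤ e^{-c} ≤ 1/2`,
where `t ↦ t - t²` increases, so the left-hand side is at most `g(c) = c² (e^{-c} - e^{-2c})`.
If `c ≤ log 2`, it is at most `c²/4 ≤ (log 2)²/4 = g(log 2)`. Finally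
`g'(c) = -c e^{-2c} h(c)` with `h(c) = (c - 2) eᶜ + 2 - 2c`; `h` is convex on `[0, ∞)` (as
`h'' = c eᶜ`) and vanishes at `0` and `c*`, so `g` increases on `[0, c*]`, decreases on `[c*, ∞)`,
and `g ≤ g(c*)` on `[0, ∞)`.
-/

open Real Set

theorem ConvexOn.nonpos_of_mem_Icc {s : Set ℝ} {f : ℝ → ℝ} (hf : ConvexOn ℝ s f) {a b x : ℝ}
    (ha : a ∈ s) (hb : b ∈ s) (hfa : f a = 0) (hfb : f b = 0) (hx : x ∈ Icc a b) : f x ≤ 0 := by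
  simpa [hfa, hfb] using hf.le_on_segment ha hb (Icc_subset_segment hx)

theorem ConvexOn.nonneg_of_le {s : Set ℝ} {f : ℝ → ℝ} (hf : ConvexOn ℝ s f) {a b x : ℝ}
    (ha : a ∈ s) (hb : b ∈ s) (hx : x ∈ s) (hfa : f a = 0) (hfb : f b = 0) (hab : a < b)
    (hbx : b ≤ x) : 0 ≤ f x := by
  have hax : 0 < x - a := by linarith
  have := hf.secant_mono ha hb hx hab.ne' (hab.trans_le hbx).ne' hbx
  rw [hfa, hfb, sub_zero, zero_div, le_div_iff₀ hax] at this
  simpa using this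

theorem isMaxOn_Ici_of_hasDerivAt {f f' : ℝ → ℝ} {a b : ℝ} (hf : ∀ x, HasDerivAt f (f' x) x)
    (hab : a ≤ b) (hinc : ∀ x ∈ Ioo a b, 0 ≤ f' x) (hdec : ∀ x, b < x → f' x ≤ 0) :
    IsMaxOn f (Ici a) b := by
  have hcont : Continuous f := continuous_iff_continuousAt.2 fun x => (hf x).continuousAt
  intro x (hx : a ≤ x)
  rcases le_total x b with hxb | hbx
  · refine monotoneOn_of_hasDerivWithinAt_nonneg (convex_Icc a b) hcont.continuousOn
      (fun y _ => (hf y).hasDerivWithinAt) (fun y hy => hinc y ?_) ⟨hx, hxb⟩ ⟨hab, le_rfl⟩ hxb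
    rwa [interior_Icc] at hy
  · refine antitoneOn_of_hasDerivWithinAt_nonpos (convex_Ici b) hcont.continuousOn
      (fun y _ => (hf y).hasDerivWithinAt) (fun y hy => hdec y ?_) self_mem_Ici hbx hbx
    rwa [interior_Ici] at hy

noncomputable def rootFun (x : ℝ) : ℝ := (x - 2) * exp x + 2 - 2 * x

noncomputable def objective (x : ℝ) : ℝ := x ^ 2 * (exp (-x) - exp (-(2 * x)))

theorem hasDerivAt_rootFun (x : ℝ) : HasDerivAt rootFun ((x - 1) * exp x - 2) x := by
  have h := ((((hasDerivAt_id x).sub_const 2).mul (hasDerivAt_exp x)).add_const 2).sub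
    ((hasDerivAt_id x).const_mul 2)
  exact h.congr_deriv (by simp only [id]; ring)

theorem convexOn_rootFun : ConvexOn ℝ (Ici 0) rootFun := by
  have hderiv2 (x : ℝ) : HasDerivAt (fun y => (y - 1) * exp y - 2) (x * exp x) x :=
    ((((hasDerivAt_id x).sub_const 1).mul (hasDerivAt_exp x)).sub_const 2).congr_deriv
      (by simp only [id]; ring)
  refine convexOn_of_hasDerivWithinAt2_nonneg (convex_Ici 0)
    (fun x _ => (hasDerivAt_rootFun x).continuousAt.continuousWithinAt)
    (fun x _ => (hasDerivAt_rootFun x).hasDerivWithinAt)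
    (fun x _ => (hderiv2 x).hasDerivWithinAt) fun x hx => ?_
  rw [interior_Ici] at hx
  exact mul_nonneg (le_of_lt hx) (exp_pos x).le

theorem rootFun_zero : rootFun 0 = 0 := by simp [rootFun]

theorem hasDerivAt_objective (x : ℝ) :
    HasDerivAt objective (-(x * exp (-(2 * x))) * rootFun x) x := by
  have h1 : HasDerivAt (fun y => exp (-y)) (-exp (-x)) x := by
    simpa using (hasDerivAt_neg x).exp
  have h2 : HasDerivAt (fun y => exp (-(2 * y))) (-2 * exp (-(2 * x))) x := by
    simpa [mul_comm] using ((hasDerivAt_id x).const_mul 2).neg.exp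
  have hexp : exp (-(2 * x)) * exp x = exp (-x) := by rw [← exp_add]; ring_nf
  refine ((hasDerivAt_pow 2 x).mul (h1.sub h2)).congr_deriv ?_
  simp only [rootFun, Pi.sub_apply]
  linear_combination (x ^ 2 - 2 * x) * hexp

theorem objective_le_of_rootFun_eq_zero {cs : ℝ} (hcs : 0 < cs) (hr : rootFun cs = 0) {c : ℝ}
    (hc : 0 ≤ c) : objective c ≤ objective cs := by
  refine isMaxOn_Ici_of_hasDerivAt hasDerivAt_objective hcs.le (fun x hx => ?_) (fun x hx => ?_) hc
  · have := convexOn_rootFun.nonpos_of_mem_Icc self_mem_Ici hcs.le rootFun_zero hr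
      (Ioo_subset_Icc_self hx)
    have := mul_pos hx.1 (exp_pos (-(2 * x)))
    nlinarith
  · have := convexOn_rootFun.nonneg_of_le self_mem_Ici hcs.le (hcs.trans hx).le rootFun_zero hr
      hcs hx.le
    have := mul_pos (hcs.trans hx) (exp_pos (-(2 * x)))
    nlinarith

theorem exp_neg_two_mul (c : ℝ) : exp (-(2 * c)) = exp (-c) ^ 2 := by
  rw [← exp_nat_mul]; ring_nf

theorem weighted_le_objective_of_log_two_le {w c : ℝ} (hw : 0 ≤ w) (hw' : w ≤ 1)
    (hc : log 2 ≤ c) :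
    w * c ^ 2 * exp (-c) - w ^ 2 * c ^ 2 * exp (-(2 * c)) ≤ objective c := by
  have hu : exp (-c) ≤ 1 / 2 := by
    simpa [exp_neg, exp_log] using exp_le_exp.2 (neg_le_neg hc)
  have hgap : objective c - (w * c ^ 2 * exp (-c) - w ^ 2 * c ^ 2 * exp (-(2 * c)))
      = c ^ 2 * exp (-c) * (1 - w) * (1 - exp (-c) * (1 + w)) := by
    rw [objective, exp_neg_two_mul]; ring
  have hfactor : 0 ≤ 1 - exp (-c) * (1 + w) := by nlinarith [exp_pos (-c)]
  have hw1 : 0 ≤ 1 - w := by linarith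
  have := exp_pos (-c)
  have : 0 ≤ c ^ 2 * exp (-c) * (1 - w) * (1 - exp (-c) * (1 + w)) := by positivity
  linarith

theorem weighted_le_objective_log_two {w c : ℝ} (hc : 0 ≤ c) (hc' : c ≤ log 2) :
    w * c ^ 2 * exp (-c) - w ^ 2 * c ^ 2 * exp (-(2 * c)) ≤ objective (log 2) := by
  have hval : objective (log 2) = (log 2) ^ 2 / 4 := by
    rw [objective, exp_neg_two_mul, exp_neg, exp_log two_pos]; ring
  have hquad : w * exp (-c) - (w * exp (-c)) ^ 2 ≤ 1 / 4 := by
    nlinarith [sq_nonneg (w * exp (-c) - 1 / 2)]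
  have hsq : c ^ 2 ≤ (log 2) ^ 2 := pow_le_pow_left₀ hc hc' 2
  rw [hval, exp_neg_two_mul]
  nlinarith [sq_nonneg c]

/-- **Global objective bound.** If `c*` is the unique positive root of
`2 - 2eᶜ + c(eᶜ - 2) = 0`, then for all `0 ≤ w ≤ 1` and `c ≥ 0`,
`w c² e^{-c} - w² c² e^{-2c} ≤ (c*)²(e^{-c*} - e^{-2c*})`. -/
theorem objective_global_bound (cs : ℝ) (hcs : 0 < cs)
    (hroot : 2 - 2 * Real.exp cs + cs * (Real.exp cs - 2) = 0)
    (w c : ℝ) (hw : 0 ≤ w) (hw' : w ≤ 1) (hc : 0 ≤ c) :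
    w * c ^ 2 * Real.exp (-c) - w ^ 2 * c ^ 2 * Real.exp (-(2 * c))
      ≤ cs ^ 2 * (Real.exp (-cs) - Real.exp (-(2 * cs))) := by
  have hr : rootFun cs = 0 := by rw [rootFun]; linear_combination hroot
  change _ ≤ objective cs
  rcases le_total c (log 2) with hsmall | hlarge
  · exact (weighted_le_objective_log_two hc hsmall).trans
      (objective_le_of_rootFun_eq_zero hcs hr (log_nonneg one_le_two))
  · exact (weighted_le_objective_of_log_two_le hw hw' hlarge).trans
      (objective_le_of_rootFun_eq_zero hcs hr hc)
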